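/- arXiv:1610.05053 — 4 statements merged into one kernel-verified Lean document; each statement's English description precedes it below -/
import Mathlib

section
/- Let d ≥ 1 and let L be a finite graded lattice of rank d+1 with atom set A and coatom set C. Then there exists a continuous map f : Δ(A) → ℝ^d such that for every point u ∈ ℝ^d, the number of coatoms c ∈ C with u ∈ f(⟨A_c⟩) is at most d · max_{a ∈ A} |C_a|. -/
/-!
Send a point `x` of `Δ(A)` to the weighted average, over the strict superlevel sets `S` of `x`,
of the point `y(⋁S)⁻¹ • e_{rk(⋁S) - 1}` of `ℝ^d`, for a weight function `y : L → ℝ` with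
algebraically independent values. On the face `⟨A_c⟩` the superlevel sets form a chain, so their
joins `z₁ < ⋯ < z_k ≤ c` have distinct ranks and `u = f(x)` satisfies `∑ᵢ y(zᵢ) uᵢ = 1`, where `zᵢ`
is the join of rank `i + 1` for every `i` in the support `T` of `u`. Fix `t ∈ T`. If the coatoms
`c` with `u ∈ f(⟨A_c⟩)` produced more than `d ≥ |T|` distinct elements `z_t`, we would get more
equations than unknowns, each containing its own variable `y(z_t)`; treating the values of `y` as
indeterminates and differentiating in these variables shows that this overdetermined system
forces `u_t = 0`. So these coatoms lie above at most `d` elements `z_t`, each above an atom.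
-/

/-- The geometric face `⟨σ⟩` of the standard simplex on a finite vertex set `α`:
points of the standard simplex vanishing outside `σ`. -/
def geomFace {α : Type*} [Fintype α] (σ : Set α) : Set (α → ℝ) :=
  {x | x ∈ stdSimplex ℝ α ∧ ∀ v, v ∉ σ → x v = 0}

theorem strictMono_of_forall_covBy {α : Type*} [PartialOrder α] [Finite α] {f : α → ℕ}
    (hf : ∀ x y : α, x ⋖ y → f y = f x + 1) : StrictMono f := by
  intro x y hxy
  induction x using WellFoundedGT.induction generalizing y with
  | _ x ih =>
    obtain ⟨z, hxz, hzy⟩ := exists_covBy_le_of_lt hxy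
    have hfz := hf x z hxz
    rcases hzy.eq_or_lt with rfl | hzy
    · omega
    · have := ih z hxz.lt hzy
      omega

section LevelWeight

variable {α : Type*} [Fintype α] [DecidableEq α]

noncomputable def outerMax (S : Finset α) (x : α → ℝ) : ℝ :=
  if h : Sᶜ.Nonempty then Sᶜ.sup' h x else 0

/-- For `x ≥ 0` and `S` nonempty, the length of the set of levels `0 ≤ λ` whose strict
superlevel set `{a | λ < x a}` is exactly `S`. -/
noncomputable def levelWeight (S : Finset α) (x : α → ℝ) : ℝ :=
  if h : S.Nonempty then max (S.inf' h x - outerMax S x) 0 else 0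

variable {S T : Finset α} {x : α → ℝ}

theorem levelWeight_nonneg : 0 ≤ levelWeight S x := by
  unfold levelWeight
  split_ifs
  exacts [le_max_right _ _, le_rfl]

theorem continuous_levelWeight (S : Finset α) : Continuous (levelWeight S) := by
  unfold levelWeight outerMax
  split_ifs
  · refine .max (.sub ?_ ?_) continuous_const
    · exact Continuous.finset_inf'_apply _ fun i _ => continuous_apply i
    · exact Continuous.finset_sup'_apply _ fun i _ => continuous_apply i
  · exact .max (.sub (Continuous.finset_inf'_apply _ fun i _ => continuous_apply i)
      continuous_const) continuous_const
  · exact continuous_const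

theorem levelWeight_ne_zero_iff :
    levelWeight S x ≠ 0 ↔ ∃ hS : S.Nonempty, outerMax S x < S.inf' hS x := by
  unfold levelWeight
  split_ifs with hS <;> simp [hS]

theorem apply_lt_apply_of_levelWeight_ne_zero (h : levelWeight S x ≠ 0) {a b : α}
    (ha : a ∈ S) (hb : b ∉ S) : x b < x a := by
  obtain ⟨hS, hlt⟩ := levelWeight_ne_zero_iff.1 h
  have hSc : Sᶜ.Nonempty := ⟨b, Finset.mem_compl.2 hb⟩
  calc x b ≤ Sᶜ.sup' hSc x := Finset.le_sup' x (Finset.mem_compl.2 hb)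
    _ = outerMax S x := by rw [outerMax, dif_pos hSc]
    _ < S.inf' hS x := hlt
    _ ≤ x a := Finset.inf'_le x ha

theorem pos_of_levelWeight_ne_zero (hx : 0 ≤ x) (h : levelWeight S x ≠ 0) {a : α}
    (ha : a ∈ S) : 0 < x a := by
  obtain ⟨hS, hlt⟩ := levelWeight_ne_zero_iff.1 h
  have houter : 0 ≤ outerMax S x := by
    unfold outerMax
    split_ifs with hSc
    · obtain ⟨b, hb⟩ := hSc
      exact (hx b).trans (Finset.le_sup' x hb)
    · exact le_rfl
  exact houter.trans_lt (hlt.trans_le (Finset.inf'_le x ha))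

theorem subset_or_subset_of_levelWeight_ne_zero (hS : levelWeight S x ≠ 0)
    (hT : levelWeight T x ≠ 0) : S ⊆ T ∨ T ⊆ S := by
  by_contra! h
  obtain ⟨a, haS, haT⟩ := Finset.not_subset.1 h.1
  obtain ⟨b, hbT, hbS⟩ := Finset.not_subset.1 h.2
  exact (apply_lt_apply_of_levelWeight_ne_zero hS haS hbS).asymm
    (apply_lt_apply_of_levelWeight_ne_zero hT hbT haT)

theorem sum_levelWeight_pos (hx : x ∈ stdSimplex ℝ α) : 0 < ∑ S, levelWeight S x := by
  have hne : (Finset.univ : Finset α).Nonempty := by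
    by_contra h
    simpa [Finset.not_nonempty_iff_eq_empty.1 h] using hx.2
  set μ := Finset.univ.sup' hne x
  set S := Finset.univ.filter fun a => x a = μ
  obtain ⟨a₀, -, ha₀⟩ := Finset.exists_mem_eq_sup' hne x
  have ha₀S : a₀ ∈ S := by simp [S, μ, ha₀]
  have hS : S.Nonempty := ⟨a₀, ha₀S⟩
  have hinf : S.inf' hS x = μ :=
    le_antisymm (Finset.inf'_le_of_le x ha₀S (Finset.mem_filter.1 ha₀S).2.le)
      (Finset.le_inf' _ _ fun a ha => (Finset.mem_filter.1 ha).2.ge)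
  have hlt : outerMax S x < S.inf' hS x := by
    rw [hinf, outerMax]
    split_ifs with hSc
    · refine (Finset.sup'_lt_iff _).2 fun b hb => ?_
      refine (Finset.le_sup' x (Finset.mem_univ b)).lt_of_ne fun hbμ => ?_
      exact Finset.mem_compl.1 hb (Finset.mem_filter.2 ⟨Finset.mem_univ b, hbμ⟩)
    · by_contra! hμ
      have : ∑ a, x a ≤ 0 :=
        Finset.sum_nonpos fun a _ => (Finset.le_sup' x (Finset.mem_univ a)).trans hμ
      linarith [hx.2]
  exact Finset.sum_pos' (fun _ _ => levelWeight_nonneg)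
    ⟨S, Finset.mem_univ _, levelWeight_nonneg.lt_of_ne' (levelWeight_ne_zero_iff.2 ⟨hS, hlt⟩)⟩

end LevelWeight

section SimplexMap

variable {L : Type*} (rk : L → ℕ) (d : ℕ) (y : L → ℝ)

noncomputable def vertex (z : L) : Fin d → ℝ := fun i => if rk z = i + 1 then (y z)⁻¹ else 0

theorem sum_mul_vertex_eq_one {Z : Fin d → L} {z : L} {i₀ : Fin d} (hz : rk z = i₀ + 1)
    (hZ : Z i₀ = z) (hy : y z ≠ 0) : ∑ i, y (Z i) * vertex rk d y z i = 1 := by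
  rw [Finset.sum_eq_single i₀ (fun i _ hi => ?_) (by simp), vertex, if_pos hz, hZ,
    mul_inv_cancel₀ hy]
  rw [vertex, if_neg (fun h => hi (Fin.ext (by omega))), mul_zero]

variable [Lattice L] [OrderBot L] [Fintype L] [DecidableEq L]

local notation "Atom" => {a : L // rk a = 1}

noncomputable def simplexMap (x : Atom → ℝ) : Fin d → ℝ :=
  (∑ S, levelWeight S x)⁻¹ • ∑ S : Finset Atom, levelWeight S x • vertex rk d y (S.sup (↑))

theorem continuousOn_simplexMap : ContinuousOn (simplexMap rk d y) (stdSimplex ℝ Atom) := by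
  have hW : Continuous fun x : Atom → ℝ => ∑ S, levelWeight S x :=
    continuous_finsetSum _ fun S _ => continuous_levelWeight S
  refine .smul (.inv₀ hW.continuousOn fun x hx => (sum_levelWeight_pos hx).ne') ?_
  exact (continuous_finsetSum _ fun S _ =>
    (continuous_levelWeight S).smul continuous_const).continuousOn

theorem simplexMap_apply (x : Atom → ℝ) (i : Fin d) :
    simplexMap rk d y x i = (∑ S, levelWeight S x)⁻¹ *
      ∑ S : Finset Atom, levelWeight S x * vertex rk d y (S.sup (↑)) i := by
  simp [simplexMap, Finset.sum_apply]

theorem sum_mul_simplexMap (x : Atom → ℝ) (Z : Fin d → L) :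
    ∑ i, y (Z i) * simplexMap rk d y x i = (∑ S, levelWeight S x)⁻¹ *
      ∑ S : Finset Atom, levelWeight S x * ∑ i, y (Z i) * vertex rk d y (S.sup (↑)) i := by
  simp only [simplexMap_apply, Finset.mul_sum]
  rw [Finset.sum_comm]
  exact Finset.sum_congr rfl fun S _ => Finset.sum_congr rfl fun i _ => by ring

variable {rk d}

theorem sup_le_of_levelWeight_ne_zero {c : L} {x : Atom → ℝ}
    (hx : x ∈ geomFace {a : Atom | (a : L) ≤ c}) {S : Finset Atom} (hS : levelWeight S x ≠ 0) :
    S.sup (↑) ≤ c :=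
  Finset.sup_le fun a ha => by_contra fun hac =>
    (pos_of_levelWeight_ne_zero hx.1.1 hS ha).ne' (hx.2 a hac)

theorem sup_eq_sup_of_levelWeight_ne_zero (hrk : StrictMono rk) {x : Atom → ℝ}
    {S T : Finset Atom} (hS : levelWeight S x ≠ 0) (hT : levelWeight T x ≠ 0)
    (h : rk (S.sup (↑)) = rk (T.sup (↑))) : S.sup ((↑) : Atom → L) = T.sup (↑) := by
  rcases subset_or_subset_of_levelWeight_ne_zero hS hT with hST | hTS
  · exact (Finset.sup_mono hST).eq_of_not_lt fun hlt => (hrk hlt).ne h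
  · exact ((Finset.sup_mono hTS).eq_of_not_lt fun hlt => (hrk hlt).ne h.symm).symm

theorem exists_chain_of_mem_geomFace (hrk : StrictMono rk) (hy : ∀ z, y z ≠ 0) {c : L}
    (hc : rk c = d) {x : Atom → ℝ} (hx : x ∈ geomFace {a : Atom | (a : L) ≤ c}) :
    ∃ Z : Fin d → L,
      (∀ i, simplexMap rk d y x i ≠ 0 →
        rk (Z i) = i + 1 ∧ Z i ≤ c ∧ ∃ a : L, rk a = 1 ∧ a ≤ Z i) ∧
      ∑ i, y (Z i) * simplexMap rk d y x i = 1 := by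
  have hsupp : ∀ i, simplexMap rk d y x i ≠ 0 →
      ∃ S : Finset Atom, levelWeight S x ≠ 0 ∧ rk (S.sup (↑)) = i + 1 := by
    intro i hi
    rw [simplexMap_apply] at hi
    obtain ⟨S, -, hS⟩ := Finset.exists_ne_zero_of_sum_ne_zero (right_ne_zero_of_mul hi)
    exact ⟨S, left_ne_zero_of_mul hS, by_contra fun h => right_ne_zero_of_mul hS (if_neg h)⟩
  let Z : Fin d → L := fun i =>
    if h : ∃ S : Finset Atom, levelWeight S x ≠ 0 ∧ rk (S.sup (↑)) = i + 1 then h.choose.sup (↑)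
    else ⊥
  have hZ : ∀ (i : Fin d) (S : Finset Atom), levelWeight S x ≠ 0 → rk (S.sup (↑)) = i + 1 →
      Z i = S.sup (↑) := by
    intro i S hS hi
    have h : ∃ S : Finset Atom, levelWeight S x ≠ 0 ∧ rk (S.sup (↑)) = i + 1 := ⟨S, hS, hi⟩
    simp only [Z, dif_pos h]
    exact sup_eq_sup_of_levelWeight_ne_zero hrk h.choose_spec.1 hS (h.choose_spec.2.trans hi.symm)
  refine ⟨Z, fun i hi => ?_, ?_⟩
  · obtain ⟨S, hS, hSi⟩ := hsupp i hi
    obtain ⟨a, ha⟩ := (levelWeight_ne_zero_iff.1 hS).1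
    rw [hZ i S hS hSi]
    exact ⟨hSi, sup_le_of_levelWeight_ne_zero hx hS, a, a.2, Finset.le_sup ha⟩
  · rw [sum_mul_simplexMap, ← inv_mul_cancel₀ (sum_levelWeight_pos hx.1).ne']
    congr 1
    refine Finset.sum_congr rfl fun S _ => ?_
    by_cases hS : levelWeight S x = 0
    · simp [hS]
    obtain ⟨a, ha⟩ := (levelWeight_ne_zero_iff.1 hS).1
    have h1 : 1 ≤ rk (S.sup (↑)) := a.2.symm.le.trans (hrk.monotone (Finset.le_sup ha))
    have h2 : rk (S.sup (↑)) ≤ d := hc ▸ hrk.monotone (sup_le_of_levelWeight_ne_zero hx hS)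
    have hi₀ : rk (S.sup (↑)) = (⟨rk (S.sup (↑)) - 1, by omega⟩ : Fin d) + 1 := by simp; omega
    rw [sum_mul_vertex_eq_one rk d y hi₀ (hZ _ S hS hi₀) (hy _), mul_one]

end SimplexMap

open Cardinal in
theorem infinite_of_isTranscendenceBasis_real {ι : Type} {x : ι → ℝ}
    (hx : IsTranscendenceBasis ℚ x) : Infinite ι := by
  by_contra hfin
  have : Finite ι := not_infinite_iff_finite.1 hfin
  have := hx.isAlgebraic
  have hle : #ℝ ≤ ℵ₀ := by
    refine (Algebra.IsAlgebraic.cardinalMk_le_max (Algebra.adjoin ℚ (Set.range x)) ℝ).trans ?_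
    exact max_le ((Algebra.cardinalMk_adjoin_le ℚ _).trans
      (max_le (max_le mk_le_aleph0 mk_le_aleph0) le_rfl)) le_rfl
  exact absurd (Cardinal.mk_real ▸ hle) (not_le.2 Cardinal.aleph0_lt_continuum)

theorem exists_algebraicIndependent_real (ι : Type*) [Finite ι] :
    ∃ y : ι → ℝ, AlgebraicIndependent ℚ y := by
  obtain ⟨ι', x, hx⟩ := exists_isTranscendenceBasis' ℚ ℝ
  have := infinite_of_isTranscendenceBasis_real hx
  obtain ⟨e⟩ := nonempty_embedding_nat ι
  exact ⟨_, hx.1.comp _ ((Infinite.natEmbedding ι').injective.comp e.injective)⟩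

theorem Pi.linearIndependent_smul_single {A ι : Type*} [CommRing A] [IsDomain A] [Fintype ι]
    [DecidableEq ι] {c : A} (hc : c ≠ 0) :
    LinearIndependent A fun j => c • (Pi.single j 1 : ι → A) := by
  rw [Fintype.linearIndependent_iff]
  intro g hg j
  have := congrFun hg j
  simp only [Finset.sum_apply, Pi.smul_apply, Pi.single_apply, smul_eq_mul, mul_ite, mul_one,
    mul_zero, Finset.sum_ite_eq, Finset.mem_univ, if_true, Pi.zero_apply] at this
  exact (mul_eq_zero.1 this).resolve_right hc

theorem Module.exists_dual_apply_ne_zero_and_ne_zero {K V : Type*} [Field K] [AddCommGroup V]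
    [Module K V] {v w : V} (hv : v ≠ 0) (hw : w ≠ 0) :
    ∃ π : Module.Dual K V, π v ≠ 0 ∧ π w ≠ 0 := by
  obtain ⟨π₁, h₁⟩ := Module.Projective.exists_dual_ne_zero K hv
  obtain ⟨π₂, h₂⟩ := Module.Projective.exists_dual_ne_zero K hw
  by_cases hw₁ : π₁ w = 0
  · by_cases hv₂ : π₂ v = 0
    · exact ⟨π₁ + π₂, by simpa [hv₂], by simpa [hw₁]⟩
    · exact ⟨π₂, hv₂, h₂⟩
  · exact ⟨π₁, h₁, hw₁⟩

theorem exists_solution_of_algebraMap {K E ι κ : Type*} [Field K] [Field E] [Algebra K E]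
    [Fintype κ] (c : ι → κ → K) (u : κ → E) (hu : ∀ j, ∑ i, algebraMap K E (c j i) * u i = 1)
    {t : κ} (ht : u t ≠ 0) : ∃ U : κ → K, (∀ j, ∑ i, c j i * U i = 1) ∧ U t ≠ 0 := by
  obtain ⟨π, h1, hπt⟩ := Module.exists_dual_apply_ne_zero_and_ne_zero (K := K) one_ne_zero ht
  refine ⟨fun i => (π 1)⁻¹ * π (u i), fun j => ?_, mul_ne_zero (inv_ne_zero h1) hπt⟩
  have := congrArg π (hu j)
  simp only [map_sum, ← Algebra.smul_def, map_smul, smul_eq_mul] at this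
  simp only [mul_left_comm _ (π 1)⁻¹, ← Finset.mul_sum, this, inv_mul_cancel₀ h1]

section Genericity

open MvPolynomial

variable {R σ ι κ : Type*} [CommRing R] [Fintype κ]

/-- Differentiating the `j₀`-th equation in the variable `x j₀ t`, which occurs in no other
entry. -/
theorem MvPolynomial.smul_single_mem_span_of_forall_sum_X_mul_eq [DecidableEq σ] [DecidableEq ι]
    (x : ι → κ → σ) (t : κ) (hx : ∀ j j₀ i, x j i = x j₀ t → j = j₀ ∧ i = t)
    (p : κ → MvPolynomial σ R) {b : MvPolynomial σ R} (h : ∀ j, ∑ i, X (x j i) * p i = b)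
    (j₀ : ι) : (b * p t) • (Pi.single j₀ 1 : ι → MvPolynomial σ R) ∈
      Submodule.span (MvPolynomial σ R) (Set.range fun i j => X (x j i)) := by
  set D := pderiv (R := R) (x j₀ t)
  have hD : ∀ j, ∑ i, D (p i) * X (x j i) + (Pi.single j₀ (p t) : ι → _) j = D b := by
    intro j
    have hsingle : ∑ i, p i * (Pi.single (x j₀ t) 1 : σ → MvPolynomial σ R) (x j i) =
        (Pi.single j₀ (p t) : ι → _) j := by
      rw [Finset.sum_eq_single t]
      · by_cases hj : j = j₀
        · subst hj; simp
        · rw [Pi.single_eq_of_ne (fun e => hj (hx _ _ _ e).1), Pi.single_eq_of_ne hj, mul_zero]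
      · intro i _ hi
        rw [Pi.single_eq_of_ne (fun e => hi (hx _ _ _ e).2), mul_zero]
      · simp
    rw [← h j, map_sum, ← hsingle, ← Finset.sum_add_distrib]
    refine Finset.sum_congr rfl fun i _ => ?_
    simp only [Derivation.leibniz, smul_eq_mul, D, pderiv_X]
    ring
  have : (b * p t) • (Pi.single j₀ 1 : ι → MvPolynomial σ R) =
      ∑ i, (D b * p i - b * D (p i)) • fun j => X (x j i) := by
    funext j
    have hsum : ∑ i, (D b * p i - b * D (p i)) * X (x j i) =
        D b * ∑ i, X (x j i) * p i - b * ∑ i, D (p i) * X (x j i) := by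
      rw [Finset.mul_sum, Finset.mul_sum, ← Finset.sum_sub_distrib]
      exact Finset.sum_congr rfl fun i _ => by ring
    simp only [Pi.smul_apply, Finset.sum_apply, smul_eq_mul]
    rw [hsum, h j, ← hD j]
    rcases eq_or_ne j j₀ with rfl | hj <;> simp [*] <;> ring
  rw [this]
  exact Submodule.sum_mem _ fun i _ => Submodule.smul_mem _ _ (Submodule.subset_span ⟨i, rfl⟩)

variable [IsDomain R] [Fintype ι]

theorem MvPolynomial.eq_zero_of_forall_sum_X_mul_eq (x : ι → κ → σ) (t : κ)
    (hcard : Fintype.card κ < Fintype.card ι) (hx : ∀ j j₀ i, x j i = x j₀ t → j = j₀ ∧ i = t)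
    (p : κ → MvPolynomial σ R) {b : MvPolynomial σ R} (hb : b ≠ 0)
    (h : ∀ j, ∑ i, X (x j i) * p i = b) : p t = 0 := by
  classical
  by_contra hpt
  have hle := linearIndependent_le_span' _ (Pi.linearIndependent_smul_single (mul_ne_zero hb hpt))
    _ (Set.range_subset_iff.2 (smul_single_mem_span_of_forall_sum_X_mul_eq x t hx p h))
  rw [Cardinal.mk_fintype, Nat.cast_le] at hle
  exact (hle.trans (Fintype.card_range_le _)).not_gt hcard

theorem FractionRing.eq_zero_of_forall_sum_algebraMap_X_mul_eq_one (x : ι → κ → σ) (t : κ)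
    (hcard : Fintype.card κ < Fintype.card ι)
    (hx : ∀ j j₀ i, x j i = x j₀ t → j = j₀ ∧ i = t)
    (U : κ → FractionRing (MvPolynomial σ R))
    (hU : ∀ j, ∑ i, algebraMap _ _ (X (x j i) : MvPolynomial σ R) * U i = 1) : U t = 0 := by
  obtain ⟨b, hb⟩ :=
    IsLocalization.exist_integer_multiples_of_finite (nonZeroDivisors (MvPolynomial σ R)) U
  choose p hp using hb
  have hb0 : (b : MvPolynomial σ R) ≠ 0 := nonZeroDivisors.coe_ne_zero b
  have hpoly : ∀ j, ∑ i, X (x j i) * p i = (b : MvPolynomial σ R) := by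
    intro j
    apply IsFractionRing.injective (MvPolynomial σ R) (FractionRing (MvPolynomial σ R))
    simp only [map_sum, map_mul, hp, Algebra.smul_def, mul_left_comm (algebraMap _ _ (X _)),
      ← Finset.mul_sum, hU j, mul_one]
  have hpt := hp t
  rw [MvPolynomial.eq_zero_of_forall_sum_X_mul_eq x t hcard hx p hb0 hpoly, map_zero,
    Algebra.smul_def, eq_comm, mul_eq_zero] at hpt
  exact hpt.resolve_left (IsFractionRing.to_map_ne_zero_of_mem_nonZeroDivisors b.2)

theorem AlgebraicIndependent.eq_zero_of_forall_sum_mul_eq_one {y : σ → ℝ}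
    (hy : AlgebraicIndependent ℚ y) (x : ι → κ → σ) (t : κ)
    (hcard : Fintype.card κ < Fintype.card ι) (hx : ∀ j j₀ i, x j i = x j₀ t → j = j₀ ∧ i = t)
    (u : κ → ℝ) (hu : ∀ j, ∑ i, y (x j i) * u i = 1) : u t = 0 := by
  by_contra ht
  let : Algebra (FractionRing (MvPolynomial σ ℚ)) ℝ :=
    (IsFractionRing.lift (g := (aeval (R := ℚ) y).toRingHom) hy).toAlgebra
  have hu' : ∀ j, ∑ i, algebraMap _ ℝ (algebraMap _ (FractionRing (MvPolynomial σ ℚ))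
      (X (x j i) : MvPolynomial σ ℚ)) * u i = 1 := by
    simpa [RingHom.algebraMap_toAlgebra, IsFractionRing.lift_algebraMap] using hu
  obtain ⟨U, hU, hUt⟩ := exists_solution_of_algebraMap _ u hu' ht
  exact hUt (FractionRing.eq_zero_of_forall_sum_algebraMap_X_mul_eq_one x t hcard hx U hU)

end Genericity

theorem ncard_le_mul_sSup_of_forall_exists_chain {L : Type*} [Fintype L] [Preorder L]
    {rk : L → ℕ} {d : ℕ} {y : L → ℝ} (hy : AlgebraicIndependent ℚ y) (u : Fin d → ℝ) {s : Set L}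
    (hs : ∀ c ∈ s, rk c = d ∧ ∃ Z : Fin d → L,
      (∀ i, u i ≠ 0 → rk (Z i) = i + 1 ∧ Z i ≤ c ∧ ∃ a : L, rk a = 1 ∧ a ≤ Z i) ∧
      ∑ i, y (Z i) * u i = 1) :
    s.ncard ≤ d * sSup {k | ∃ a : L, rk a = 1 ∧ {c : L | rk c = d ∧ a ≤ c}.ncard = k} := by
  classical
  choose! Z hZ hZsum using fun c hc => (hs c hc).2
  rcases s.eq_empty_or_nonempty with rfl | ⟨c₀, hc₀⟩
  · simp
  obtain ⟨t, ht⟩ : ∃ t, u t ≠ 0 := by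
    by_contra! hu
    simpa [hu] using hZsum c₀ hc₀
  set T := Finset.univ.filter fun i => u i ≠ 0
  set tops := s.toFinset.image fun c => Z c t
  have htops : tops.card ≤ d := by
    by_contra! hcard
    have hc : ∀ z : tops, ∃ c ∈ s, Z c t = z := fun z => by
      obtain ⟨c, hc, h⟩ := Finset.mem_image.1 z.2
      exact ⟨c, Set.mem_toFinset.1 hc, h⟩
    choose c hcs hct using hc
    have := hy.eq_zero_of_forall_sum_mul_eq_one (fun z (i : T) => Z (c z) i)
      ⟨t, by simpa [T] using ht⟩ (by simpa using (Finset.card_le_univ T).trans_lt (by simpa using hcard)) ?_ (fun i => u i) ?_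
    · exact ht this
    · rintro j j₀ ⟨i, hi⟩ h
      have hi' : u i ≠ 0 := by simpa [T] using hi
      have := (hZ _ (hcs j) i hi').1
      rw [h, (hZ _ (hcs j₀) t ht).1] at this
      obtain rfl : i = t := Fin.ext (by omega)
      exact ⟨Subtype.ext ((hct j).symm.trans (h.trans (hct j₀))), rfl⟩
    · intro j
      rw [Finset.sum_coe_sort T (fun i => y (Z (c j) i) * u i), Finset.sum_filter_of_ne
        fun i _ h => right_ne_zero_of_mul h, hZsum _ (hcs j)]
  have hbdd : BddAbove {k | ∃ a : L, rk a = 1 ∧ {c : L | rk c = d ∧ a ≤ c}.ncard = k} :=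
    ⟨Nat.card L, by rintro _ ⟨a, -, rfl⟩; exact Set.ncard_le_card _⟩
  rw [Set.ncard_eq_toFinset_card', mul_comm]
  refine (Finset.card_le_mul_card_image _ _ fun z hz => ?_).trans (Nat.mul_le_mul_left _ htops)
  obtain ⟨c₀, hc₀, rfl⟩ := Finset.mem_image.1 hz
  obtain ⟨-, -, a, ha, haz⟩ := hZ c₀ (Set.mem_toFinset.1 hc₀) t ht
  refine le_csSup_of_le hbdd ⟨a, ha, rfl⟩ ?_
  rw [Set.ncard_eq_toFinset_card']
  refine Finset.card_le_card fun c hc => ?_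
  simp only [Finset.mem_filter, Set.mem_toFinset] at hc ⊢
  exact ⟨(hs c hc.1).1, haz.trans (hc.2 ▸ (hZ c hc.1 t ht).2.1)⟩

theorem exists_map_few_coatoms_cover_general (d : ℕ)
    (L : Type*) [Fintype L] [Lattice L] [BoundedOrder L]
    (rk : L → ℕ)
    (hcov : ∀ x y : L, x ⋖ y → rk y = rk x + 1) :
    ∃ f : ({a : L // rk a = 1} → ℝ) → (Fin d → ℝ),
      ContinuousOn f (stdSimplex ℝ {a : L // rk a = 1}) ∧
      ∀ u : Fin d → ℝ,
        {c : L | rk c = d ∧ u ∈ f '' geomFace {a : {a : L // rk a = 1} | (a : L) ≤ c}}.ncard ≤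
          d * sSup {k | ∃ a : L, rk a = 1 ∧ {c : L | rk c = d ∧ a ≤ c}.ncard = k} := by
  classical
  obtain ⟨y, hy⟩ := exists_algebraicIndependent_real L
  refine ⟨simplexMap rk d y, continuousOn_simplexMap rk d y, fun u => ?_⟩
  refine ncard_le_mul_sSup_of_forall_exists_chain hy u fun c ⟨hc, x, hx, hxu⟩ => ⟨hc, ?_⟩
  exact hxu ▸ exists_chain_of_mem_geomFace y (strictMono_of_forall_covBy hcov) hy.ne_zero hc hx

/-- **Proposition 3.1.** Let `L` be a finite graded lattice of rank `d+1` with atom set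
`A = {x | rk x = 1}` and coatom set `C = {x | rk x = d}`. Then there exists a continuous
map `f : Δ(A) → ℝ^d` such that for every `u ∈ ℝ^d`, the number of coatoms `c ∈ C` with
`u ∈ f(⟨A_c⟩)` is at most `d · max_{a ∈ A} |C_a|`, where `A_c = {a ∈ A | a ≤ c}` and
`C_a = {c ∈ C | a ≤ c}`. -/
theorem exists_map_few_coatoms_cover (d : ℕ) (hd : 1 ≤ d)
    (L : Type*) [Fintype L] [Lattice L] [BoundedOrder L]
    (rk : L → ℕ) (hbot : rk ⊥ = 0)
    (hcov : ∀ x y : L, x ⋖ y → rk y = rk x + 1)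
    (htop : rk ⊤ = d + 1) :
    ∃ f : ({a : L // rk a = 1} → ℝ) → (Fin d → ℝ),
      ContinuousOn f (stdSimplex ℝ {a : L // rk a = 1}) ∧
      ∀ u : Fin d → ℝ,
        {c : L | rk c = d ∧ u ∈ f '' geomFace {a : {a : L // rk a = 1} | (a : L) ≤ c}}.ncard ≤
          d * sSup {k | ∃ a : L, rk a = 1 ∧ {c : L | rk c = d ∧ a ≤ c}.ncard = k} :=
  exists_map_few_coatoms_cover_general d L rk hcov
end

section
/- Let d ≥ 1 and let L be a finite graded lattice of rank d+1 with atom set A, and let L̃ = L \ {⊥}. Then there exists a continuous map g : Δ(A) → |Δ(L̃)| such that for every x ∈ L̃, g(⟨A_x⟩) ⊆ |Δ(L̃_{≤x})|, where L̃_{≤x} = {y ∈ L̃ : y ≤ x}. -/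
/-- The geometric realization `|Δ(P)|` of the order complex of a finite poset `P`:
points of the standard simplex on `P` whose support is a chain. -/
def orderComplexRealization (P : Type*) [Fintype P] [PartialOrder P] : Set (P → ℝ) :=
  {x | x ∈ stdSimplex ℝ P ∧ IsChain (· ≤ ·) {y : P | x y ≠ 0}}

noncomputable section Claim32Aux

namespace Claim32

open Finset
open scoped Classical

variable {ι L : Type*} [Fintype ι] [Lattice L] [BoundedOrder L]

/-- The join of the "atoms" with weight at least `t`. -/
def Jmap (v : ι → L) (p : ι → ℝ) (t : ℝ) : L :=
  (univ.filter fun a => t ≤ p a).sup v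

/-- Lower threshold for `y`. -/
def sig (v : ι → L) (y : L) (p : ι → ℝ) : ℝ :=
  (univ.filter fun a => ¬ v a ≤ y).fold max 0 p

/-- Upper threshold for `y`. -/
def tau (v : ι → L) (y : L) (p : ι → ℝ) : ℝ :=
  (univ.powerset.filter fun S : Finset ι => y ≤ S.sup v).fold max 0
    (fun S => if h : S.Nonempty then S.inf' h p else 0)

/-- The maximum coordinate (at least 0). -/
def Mx (p : ι → ℝ) : ℝ := univ.fold max 0 p

lemma Jmap_le_iff {v : ι → L} {p : ι → ℝ} {t : ℝ} {y : L} :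
    Jmap v p t ≤ y ↔ ∀ a, t ≤ p a → v a ≤ y := by
  simp [Jmap, Finset.sup_le_iff]

lemma le_Jmap {v : ι → L} {p : ι → ℝ} {t : ℝ} {a : ι} (h : t ≤ p a) :
    v a ≤ Jmap v p t :=
  Finset.le_sup (by simp [h])

lemma Jmap_anti {v : ι → L} {p : ι → ℝ} {s t : ℝ} (h : s ≤ t) :
    Jmap v p t ≤ Jmap v p s := by
  apply Finset.sup_mono
  intro a ha
  simp only [mem_filter, mem_univ, true_and] at ha ⊢
  exact le_trans h ha

lemma sig_nonneg {v : ι → L} {y : L} {p : ι → ℝ} : 0 ≤ sig v y p :=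
  (Finset.le_fold_max _).2 (Or.inl le_rfl)

lemma sig_lt_iff {v : ι → L} {y : L} {p : ι → ℝ} {t : ℝ} :
    sig v y p < t ↔ 0 < t ∧ ∀ a, ¬ v a ≤ y → p a < t := by
  simp [sig, Finset.fold_max_lt]

lemma le_tau_iff {v : ι → L} {y : L} (hy : y ≠ ⊥) {p : ι → ℝ} {t : ℝ} (ht : 0 < t) :
    t ≤ tau v y p ↔ y ≤ Jmap v p t := by
  rw [tau, Finset.le_fold_max]
  constructor
  · rintro (h | ⟨S, hS, hle⟩)
    · exact absurd h (not_le.2 ht)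
    · simp only [mem_filter, mem_powerset] at hS
      rcases S.eq_empty_or_nonempty with rfl | hne
      · simp only [Finset.sup_empty, le_bot_iff] at hS
        exact absurd hS.2 hy
      · rw [dif_pos hne] at hle
        refine hS.2.trans (Finset.sup_mono ?_)
        intro a ha
        simp only [mem_filter, mem_univ, true_and]
        exact hle.trans (Finset.inf'_le _ ha)
  · intro hyJ
    have hne : (univ.filter fun a => t ≤ p a).Nonempty := by
      rcases (univ.filter fun a => t ≤ p a).eq_empty_or_nonempty with he | hne
      · exfalso
        apply hy
        have : Jmap v p t = ⊥ := by rw [Jmap, he, Finset.sup_empty]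
        exact le_bot_iff.1 (this ▸ hyJ)
      · exact hne
    right
    refine ⟨univ.filter fun a => t ≤ p a, ?_, ?_⟩
    · simp only [mem_filter, mem_powerset]
      exact ⟨Finset.subset_univ _, hyJ⟩
    · rw [dif_pos hne]
      exact Finset.le_inf' _ _ fun a ha => (mem_filter.1 ha).2

lemma mem_Ioc_iff {v : ι → L} {y : L} (hy : y ≠ ⊥) {p : ι → ℝ} {t : ℝ} :
    t ∈ Set.Ioc (sig v y p) (tau v y p) ↔ 0 < t ∧ Jmap v p t = y := by
  constructor
  · rintro ⟨h1, h2⟩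
    rw [sig_lt_iff] at h1
    obtain ⟨ht, hall⟩ := h1
    have hJle : Jmap v p t ≤ y := by
      rw [Jmap_le_iff]
      intro a hta
      by_contra hay
      exact absurd hta (not_le.2 (hall a hay))
    exact ⟨ht, le_antisymm hJle ((le_tau_iff hy ht).1 h2)⟩
  · rintro ⟨ht, hJ⟩
    refine ⟨sig_lt_iff.2 ⟨ht, fun a hay => ?_⟩, (le_tau_iff hy ht).2 hJ.ge⟩
    by_contra h
    push_neg at h
    exact hay (hJ ▸ le_Jmap h)

lemma continuous_fold_max {X α : Type*} [TopologicalSpace X] (s : Finset α)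
    (f : α → X → ℝ) (hf : ∀ j ∈ s, Continuous (f j)) :
    Continuous fun x => s.fold max 0 (fun j => f j x) := by
  induction s using Finset.cons_induction with
  | empty => simpa using continuous_const
  | cons a s ha ih =>
    simp only [Finset.fold_cons]
    exact (hf a (Finset.mem_cons_self a s)).max
      (ih fun j hj => hf j (Finset.mem_cons.2 (Or.inr hj)))

lemma continuous_sig (v : ι → L) (y : L) :
    Continuous fun p : ι → ℝ => sig v y p := by
  apply continuous_fold_max
  intro j _
  exact continuous_apply j

lemma continuous_tau (v : ι → L) (y : L) :
    Continuous fun p : ι → ℝ => tau v y p := by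
  apply continuous_fold_max
  intro S _
  by_cases h : S.Nonempty
  · simp only [dif_pos h]
    exact Continuous.finset_inf'_apply h fun i _ => continuous_apply i
  · simp only [dif_neg h]
    exact continuous_const

lemma continuous_Mx : Continuous fun p : ι → ℝ => Mx p := by
  apply continuous_fold_max
  intro j _
  exact continuous_apply j

lemma toReal_ofReal_eq_max (x : ℝ) : (ENNReal.ofReal x).toReal = max x 0 :=
  ENNReal.toReal_ofReal'

end Claim32

end Claim32Aux

/-- **Claim 3.2.** Let `L` be a finite graded lattice of rank `d+1` with atom set
`A = {x | rk x = 1}` and let `L̃ = L \ {⊥}`. There exists a continuous map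
`g : Δ(A) → |Δ(L̃)|` such that for every `x ∈ L̃` one has `g(⟨A_x⟩) ⊆ |Δ(L̃_{≤ x})|`,
the subcomplex of points supported on chains contained in `{y ∈ L̃ | y ≤ x}`. -/
theorem exists_map_to_order_complex (d : ℕ) (hd : 1 ≤ d)
    (L : Type*) [Fintype L] [DecidableEq L] [Lattice L] [BoundedOrder L]
    (rk : L → ℕ) (hbot : rk ⊥ = 0)
    (hcov : ∀ x y : L, x ⋖ y → rk y = rk x + 1)
    (htop : rk ⊤ = d + 1) :
    ∃ g : ({a : L // rk a = 1} → ℝ) → ({y : L // y ≠ ⊥} → ℝ),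
      ContinuousOn g (stdSimplex ℝ {a : L // rk a = 1}) ∧
      Set.MapsTo g (stdSimplex ℝ {a : L // rk a = 1})
        (orderComplexRealization {y : L // y ≠ ⊥}) ∧
      ∀ x : L, x ≠ ⊥ →
        g '' geomFace {a : {a : L // rk a = 1} | (a : L) ≤ x} ⊆
          {p ∈ orderComplexRealization {y : L // y ≠ ⊥} |
            ∀ y : {y : L // y ≠ ⊥}, p y ≠ 0 → (y : L) ≤ x} := by
  classical
  set v : {a : L // rk a = 1} → L := Subtype.val with hv
  have hA0 : ∀ a : {a : L // rk a = 1}, v a ≠ ⊥ := by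
    intro a h
    have h2 := a.2
    rw [hv] at h
    rw [h, hbot] at h2
    exact one_ne_zero h2.symm
  set w : {y : L // y ≠ ⊥} → ({a : L // rk a = 1} → ℝ) → ℝ :=
    fun y p => max (Claim32.tau v (y : L) p - Claim32.sig v (y : L) p) 0 with hw
  set M : ({a : L // rk a = 1} → ℝ) → ℝ := fun p => Claim32.Mx p with hM
  have hMnonneg : ∀ p, 0 ≤ M p := fun p => (Finset.le_fold_max _).2 (Or.inl le_rfl)
  have hMpos : ∀ p ∈ stdSimplex ℝ {a : L // rk a = 1}, 0 < M p := by
    intro p hp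
    obtain ⟨a, ha⟩ : ∃ a, 0 < p a := by
      by_contra hcon
      push_neg at hcon
      have hle : (∑ a, p a) ≤ 0 := Finset.sum_nonpos fun a _ => hcon a
      rw [hp.2] at hle
      linarith
    have : p a ≤ M p := (Finset.le_fold_max _).2 (Or.inr ⟨a, Finset.mem_univ a, le_rfl⟩)
    linarith
  have hwit : ∀ (p : {a : L // rk a = 1} → ℝ) (y : {y : L // y ≠ ⊥}), w y p ≠ 0 →
      ∃ t, 0 < t ∧ Claim32.Jmap v p t = (y : L) := by
    intro p y hy
    have hlt : Claim32.sig v (y : L) p < Claim32.tau v (y : L) p := by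
      by_contra hle
      push_neg at hle
      apply hy
      exact max_eq_right (by linarith)
    have hmem : Claim32.tau v (y : L) p ∈
        Set.Ioc (Claim32.sig v (y : L) p) (Claim32.tau v (y : L) p) := ⟨hlt, le_rfl⟩
    obtain ⟨ht, hJ⟩ := (Claim32.mem_Ioc_iff y.2).1 hmem
    exact ⟨_, ht, hJ⟩
  have hsum : ∀ p : {a : L // rk a = 1} → ℝ, (∑ y : {y : L // y ≠ ⊥}, w y p) = M p := by
    intro p
    have hdisj : Set.PairwiseDisjoint
        ((Finset.univ : Finset {y : L // y ≠ ⊥}) : Set {y : L // y ≠ ⊥})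
        (fun y : {y : L // y ≠ ⊥} =>
          Set.Ioc (Claim32.sig v (y : L) p) (Claim32.tau v (y : L) p)) := by
      intro y _ z _ hyz
      refine Set.disjoint_left.2 fun t hty htz => ?_
      obtain ⟨_, hy⟩ := (Claim32.mem_Ioc_iff y.2).1 hty
      obtain ⟨_, hz⟩ := (Claim32.mem_Ioc_iff z.2).1 htz
      exact hyz (Subtype.ext (hy.symm.trans hz))
    have hun : (⋃ y ∈ (Finset.univ : Finset {y : L // y ≠ ⊥}),
        Set.Ioc (Claim32.sig v (y : L) p) (Claim32.tau v (y : L) p)) =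
        Set.Ioc 0 (M p) := by
      ext t
      simp only [Set.mem_iUnion, Finset.mem_univ, exists_prop, true_and, Set.mem_Ioc]
      constructor
      · rintro ⟨y, hty⟩
        obtain ⟨ht, hJ⟩ := (Claim32.mem_Ioc_iff y.2).1 hty
        refine ⟨ht, ?_⟩
        obtain ⟨a, hta⟩ : ∃ a, t ≤ p a := by
          by_contra hcon
          push_neg at hcon
          have he : (Finset.univ.filter fun a : {a : L // rk a = 1} => t ≤ p a) = ∅ := by
            apply Finset.filter_false_of_mem
            intro a _
            exact not_le.2 (hcon a)
          have hJb : Claim32.Jmap v p t = ⊥ := by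
            rw [Claim32.Jmap, he, Finset.sup_empty]
          exact y.2 (hJb.symm.trans hJ).symm
        exact hta.trans ((Finset.le_fold_max _).2 (Or.inr ⟨a, Finset.mem_univ a, le_rfl⟩))
      · rintro ⟨ht, htM⟩
        obtain ⟨a, hta⟩ : ∃ a, t ≤ p a := by
          rcases (Finset.le_fold_max _).1 htM with h | ⟨a, _, ha⟩
          · exact absurd h (not_le.2 ht)
          · exact ⟨a, ha⟩
        have hyne : Claim32.Jmap v p t ≠ ⊥ := by
          intro h
          exact hA0 a (le_bot_iff.1 (h ▸ Claim32.le_Jmap hta))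
        exact ⟨⟨Claim32.Jmap v p t, hyne⟩, (Claim32.mem_Ioc_iff hyne).2 ⟨ht, rfl⟩⟩
    have hmeas := MeasureTheory.measure_biUnion_finset (μ := MeasureTheory.volume)
      hdisj (fun y _ => measurableSet_Ioc)
    rw [hun, Real.volume_Ioc] at hmeas
    simp only [Real.volume_Ioc] at hmeas
    calc (∑ y : {y : L // y ≠ ⊥}, w y p)
        = ∑ y : {y : L // y ≠ ⊥}, (ENNReal.ofReal (Claim32.tau v (y : L) p -
            Claim32.sig v (y : L) p)).toReal := by
          refine Finset.sum_congr rfl fun y _ => ?_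
          rw [Claim32.toReal_ofReal_eq_max]
      _ = (∑ y : {y : L // y ≠ ⊥}, ENNReal.ofReal (Claim32.tau v (y : L) p -
            Claim32.sig v (y : L) p)).toReal := by
          rw [ENNReal.toReal_sum]
          intro y _
          exact ENNReal.ofReal_ne_top
      _ = (ENNReal.ofReal (M p - 0)).toReal := by
          rw [← hmeas]
      _ = M p := by
          rw [sub_zero, ENNReal.toReal_ofReal (hMnonneg p)]
  refine ⟨fun p y => w y p / M p, ?_, ?_, ?_⟩
  · -- continuity
    apply continuousOn_pi.2
    intro y
    apply ContinuousOn.div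
    · apply Continuous.continuousOn
      exact ((Claim32.continuous_tau v (y : L)).sub
        (Claim32.continuous_sig v (y : L))).max continuous_const
    · exact Claim32.continuous_Mx.continuousOn
    · intro p hp
      exact (hMpos p hp).ne'
  · -- maps to the order complex realization
    intro p hp
    have hMp := hMpos p hp
    refine ⟨⟨fun y => div_nonneg (le_max_right _ 0) hMp.le, ?_⟩, ?_⟩
    · rw [← Finset.sum_div, hsum, div_self hMp.ne']
    · intro y hy z hz hyz
      simp only [Set.mem_setOf_eq] at hy hz
      have hy' : w y p ≠ 0 := fun h => hy (by rw [h, zero_div])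
      have hz' : w z p ≠ 0 := fun h => hz (by rw [h, zero_div])
      obtain ⟨t, ht, hJy⟩ := hwit p y hy'
      obtain ⟨s, hs, hJz⟩ := hwit p z hz'
      rcases le_total t s with hts | hst
      · right
        show (z : L) ≤ (y : L)
        rw [← hJy, ← hJz]
        exact Claim32.Jmap_anti hts
      · left
        show (y : L) ≤ (z : L)
        rw [← hJy, ← hJz]
        exact Claim32.Jmap_anti hst
  · -- the face condition
    intro x hx
    rintro _ ⟨p, ⟨hp, hp0⟩, rfl⟩
    have hMp := hMpos p hp
    constructor
    · refine ⟨⟨fun y => div_nonneg (le_max_right _ 0) hMp.le, ?_⟩, ?_⟩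
      · rw [← Finset.sum_div, hsum, div_self hMp.ne']
      · intro y hy z hz hyz
        simp only [Set.mem_setOf_eq] at hy hz
        have hy' : w y p ≠ 0 := fun h => hy (by rw [h, zero_div])
        have hz' : w z p ≠ 0 := fun h => hz (by rw [h, zero_div])
        obtain ⟨t, ht, hJy⟩ := hwit p y hy'
        obtain ⟨s, hs, hJz⟩ := hwit p z hz'
        rcases le_total t s with hts | hst
        · right
          show (z : L) ≤ (y : L)
          rw [← hJy, ← hJz]
          exact Claim32.Jmap_anti hts
        · left
          show (y : L) ≤ (z : L)
          rw [← hJy, ← hJz]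
          exact Claim32.Jmap_anti hst
    · intro y hy
      have hy' : w y p ≠ 0 := fun h => hy (by simp only [h, zero_div])
      obtain ⟨t, ht, hJy⟩ := hwit p y hy'
      rw [← hJy, Claim32.Jmap_le_iff]
      intro a hta
      by_contra hax
      have hzero := hp0 a hax
      rw [hzero] at hta
      exact absurd hta (not_le.2 ht)
end

section
/- Let d ≥ 1, let q be a prime power, let F be a finite field with q elements, and let Z be a nonempty set of 1-dimensional linear subspaces of F^{d+1}. Let Γ(Z) be the set of hyperplanes (d-dimensional linear subspaces) of F^{d+1} containing at least one member of Z. Then |Γ(Z)| ≥ |Z|·N_{d−1}² / ( N_{d−1} + (|Z| − 1)·N_{d−2} ), where N_k = (q^{k+1} − 1)/(q − 1). -/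
/-!
A line lies in `N_{d-1}` hyperplanes, and two distinct lines span a plane lying in `N_{d-2}`
hyperplanes: by duality, the hyperplanes containing a subspace `U` correspond to the lines of
`U.dualAnnihilator`, a space of dimension `d + 1 - dim U`. Counting the incidences between `Z`
and `Γ(Z)`, and pairs of such incidences, the Cauchy–Schwarz inequality gives Corrádi's bound
`|Z| N_{d-1}² ≤ |Γ(Z)| (N_{d-1} + (|Z| - 1) N_{d-2})`.
-/

open Finset Module

namespace Finset

variable {ι α : Type*} [DecidableEq α] {s : Finset ι} {A : ι → Finset α}

lemma sum_card_filter_mem_biUnion :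
    ∑ x ∈ s.biUnion A, #{i ∈ s | x ∈ A i} = ∑ i ∈ s, #(A i) := by
  simp_rw [card_filter]
  rw [sum_comm]
  refine sum_congr rfl fun i hi => ?_
  rw [← card_filter, filter_mem_eq_inter, inter_eq_right.mpr (subset_biUnion_of_mem A hi)]

lemma sum_sq_card_filter_mem_biUnion :
    ∑ x ∈ s.biUnion A, #{i ∈ s | x ∈ A i} ^ 2 = ∑ i ∈ s, ∑ j ∈ s, #(A i ∩ A j) := by
  simp_rw [card_filter, sq, sum_mul_sum, ite_zero_mul_ite_zero, mul_one, ← mem_inter]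
  rw [sum_comm]
  refine sum_congr rfl fun i hi => ?_
  rw [sum_comm]
  refine sum_congr rfl fun j _ => ?_
  rw [← card_filter, filter_mem_eq_inter,
    inter_eq_right.mpr (inter_subset_left.trans (subset_biUnion_of_mem A hi))]

theorem card_mul_sq_le_card_biUnion_mul {r l : ℕ} (hA : ∀ i ∈ s, #(A i) = r)
    (hAA : ∀ i ∈ s, ∀ j ∈ s, i ≠ j → #(A i ∩ A j) ≤ l) :
    #s * r ^ 2 ≤ #(s.biUnion A) * (r + (#s - 1) * l) := by
  classical
  have hrow : ∀ i ∈ s, ∑ j ∈ s, #(A i ∩ A j) ≤ r + (#s - 1) * l := by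
    intro i hi
    rw [← add_sum_erase _ _ hi, inter_self, hA i hi, ← card_erase_of_mem hi, ← smul_eq_mul]
    gcongr
    exact sum_le_card_nsmul _ _ _ fun j hj =>
      hAA i hi j (mem_of_mem_erase hj) (ne_of_mem_erase hj).symm
  have hCS := sq_sum_le_card_mul_sum_sq (s := s.biUnion A) (f := fun x => #{i ∈ s | x ∈ A i})
  rw [sum_card_filter_mem_biUnion, sum_sq_card_filter_mem_biUnion, sum_congr rfl hA,
    sum_const, smul_eq_mul] at hCS
  rcases (#s).eq_zero_or_pos with hs | hs
  · simp [hs]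
  refine Nat.le_of_mul_le_mul_left ?_ hs
  calc #s * (#s * r ^ 2) = (#s * r) ^ 2 := by ring
    _ ≤ #(s.biUnion A) * ∑ i ∈ s, ∑ j ∈ s, #(A i ∩ A j) := hCS
    _ ≤ #(s.biUnion A) * (#s * (r + (#s - 1) * l)) := by
      gcongr
      simpa using sum_le_card_nsmul _ _ _ hrow
    _ = #s * (#(s.biUnion A) * (r + (#s - 1) * l)) := by ring

end Finset

theorem Set.ncard_mul_sq_le_ncard_biUnion_mul {ι α : Type*} [Finite ι] [Finite α]
    {s : Set ι} {A : ι → Set α} {r l : ℕ}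
    (hA : ∀ i ∈ s, (A i).ncard = r) (hAA : ∀ i ∈ s, ∀ j ∈ s, i ≠ j → (A i ∩ A j).ncard ≤ l) :
    s.ncard * r ^ 2 ≤ (⋃ i ∈ s, A i).ncard * (r + (s.ncard - 1) * l) := by
  classical
  have := Fintype.ofFinite ι
  have := Fintype.ofFinite α
  have key := Finset.card_mul_sq_le_card_biUnion_mul (s := s.toFinset)
    (A := fun i => (A i).toFinset) (r := r) (l := l)
    (fun i hi => by rw [← Set.ncard_eq_toFinset_card', hA i (Set.mem_toFinset.mp hi)])
    (fun i hi j hj hij => by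
      rw [← Set.toFinset_inter, ← Set.ncard_eq_toFinset_card']
      exact hAA i (Set.mem_toFinset.mp hi) j (Set.mem_toFinset.mp hj) hij)
  have hU : s.toFinset.biUnion (fun i => (A i).toFinset) = (⋃ i ∈ s, A i).toFinset := by
    ext; simp
  rwa [hU, ← Set.ncard_eq_toFinset_card', ← Set.ncard_eq_toFinset_card'] at key

namespace Submodule

variable {K V : Type*} [Field K] [AddCommGroup V] [Module K V]

lemma ncard_setOf_finrank_eq_one [Finite K] [Finite V] :
    {L : Submodule K V | finrank K L = 1}.ncard =
      (Nat.card K ^ finrank K V - 1) / (Nat.card K - 1) := by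
  rw [← Nat.card_coe_set_eq, Set.coe_ofPred,
    ← Nat.card_congr (Projectivization.equivSubmodule K V), Projectivization.card'',
    Module.natCard_eq_pow_finrank (K := K)]

lemma ncard_setOf_finrank_eq_one_le [Finite K] [Finite V] (P : Submodule K V) :
    {L : Submodule K V | finrank K L = 1 ∧ L ≤ P}.ncard =
      (Nat.card K ^ finrank K P - 1) / (Nat.card K - 1) := by
  have himage : {L : Submodule K V | finrank K L = 1 ∧ L ≤ P} =
      map P.subtype '' {L : Submodule K P | finrank K L = 1} := by
    ext L
    constructor
    · rintro ⟨hL, hLP⟩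
      refine ⟨comap P.subtype L, ?_, by rw [map_comap_subtype, inf_eq_right.mpr hLP]⟩
      rwa [Set.mem_ofPred_eq, (comapSubtypeEquivOfLe hLP).finrank_eq]
    · rintro ⟨L, hL, rfl⟩
      exact ⟨by rwa [finrank_map_subtype_eq], map_subtype_le P L⟩
  rw [himage, Set.ncard_image_of_injective _ (map_injective_of_injective P.injective_subtype),
    ncard_setOf_finrank_eq_one]

lemma ncard_hyperplanes_containing [Finite K] [Finite V] (U : Submodule K V) :
    {c : Submodule K V | finrank K c + 1 = finrank K V ∧ U ≤ c}.ncard =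
      (Nat.card K ^ (finrank K V - finrank K U) - 1) / (Nat.card K - 1) := by
  have himage : dualAnnihilator '' {c : Submodule K V | finrank K c + 1 = finrank K V ∧ U ≤ c} =
      {L : Submodule K (Dual K V) | finrank K L = 1 ∧ L ≤ U.dualAnnihilator} := by
    ext L
    constructor
    · rintro ⟨c, ⟨hc, hUc⟩, rfl⟩
      have := Subspace.finrank_add_finrank_dualAnnihilator_eq c
      exact ⟨by omega, dualAnnihilator_anti hUc⟩
    · rintro ⟨hL, hLU⟩
      have := Subspace.finrank_add_finrank_dualCoannihilator_eq L
      refine ⟨L.dualCoannihilator, ⟨by omega, ?_⟩, Subspace.dualCoannihilator_dualAnnihilator_eq⟩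
      exact (le_dualAnnihilator_iff_le_dualCoannihilator).mp hLU
  have : Finite (Dual K V) := Module.finite_of_finite K
  have hdim := Subspace.finrank_add_finrank_dualAnnihilator_eq U
  rw [← Set.ncard_image_of_injective _ fun _ _ => Subspace.dualAnnihilator_inj.mp, himage,
    ncard_setOf_finrank_eq_one_le]
  congr 3
  omega

lemma finrank_sup_eq_two_of_ne [FiniteDimensional K V] {a b : Submodule K V}
    (ha : finrank K a = 1) (hb : finrank K b = 1) (hab : a ≠ b) : finrank K ↥(a ⊔ b) = 2 := by
  have hdisj := (isAtom_iff_finrank_eq_one.mpr ha).disjoint_of_ne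
    (isAtom_iff_finrank_eq_one.mpr hb) hab
  have := finrank_sup_add_finrank_inf_eq a b
  rw [hdisj.eq_bot, finrank_bot, ha, hb] at this
  omega

end Submodule

theorem neighborhood_lower_bound_general (d : ℕ) (q : ℕ)
    (F : Type*) [Field F] [Fintype F] (hcard : Fintype.card F = q)
    (Z : Set (Submodule F (Fin (d + 1) → F)))
    (hZ : Z.Nonempty) (hZ1 : ∀ a ∈ Z, Module.finrank F a = 1) :
    ((Z.ncard : ℝ) * (((q ^ d - 1) / (q - 1) : ℕ) : ℝ) ^ 2) /
        ((((q ^ d - 1) / (q - 1) : ℕ) : ℝ) +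
          ((Z.ncard : ℝ) - 1) * (((q ^ (d - 1) - 1) / (q - 1) : ℕ) : ℝ)) ≤
      ({c : Submodule F (Fin (d + 1) → F) |
          Module.finrank F c = d ∧ ∃ a ∈ Z, a ≤ c}.ncard : ℝ) := by
  set A : Submodule F (Fin (d + 1) → F) → Set (Submodule F (Fin (d + 1) → F)) :=
    fun U => {c | finrank F c = d ∧ U ≤ c}
  have hA : ∀ U, (A U).ncard = (q ^ (d + 1 - finrank F U) - 1) / (q - 1) := fun U => by
    simpa [A, finrank_fin_fun, hcard] using Submodule.ncard_hyperplanes_containing U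
  have hΓ : {c : Submodule F (Fin (d + 1) → F) | finrank F c = d ∧ ∃ a ∈ Z, a ≤ c} =
      ⋃ a ∈ Z, A a := by
    ext c; simp [A]
  have key := Set.ncard_mul_sq_le_ncard_biUnion_mul (s := Z) (A := A)
    (fun a ha => by rw [hA, hZ1 a ha, Nat.add_sub_cancel])
    (fun a ha b hb hab => by
      rw [show A a ∩ A b = A (a ⊔ b) by ext c; simp [A]; tauto, hA,
        Submodule.finrank_sup_eq_two_of_ne (hZ1 a ha) (hZ1 b hb) hab, Nat.add_sub_add_right])
  have hZpos : 0 < Z.ncard := (Set.ncard_pos (Set.toFinite Z)).mpr hZ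
  rw [hΓ, ← Nat.cast_pred hZpos]
  exact div_le_of_le_mul₀ (by positivity) (by positivity) (by exact_mod_cast key)

/-- **Expansion of the atom–coatom graph of `L(d+1, q)` (Corrádi-type bound).**
Let `F` be a field with `q` elements (`q` a prime power), `d ≥ 1`, and let `Z` be a
nonempty set of `1`-dimensional subspaces of `F^{d+1}`. Let `Γ(Z)` be the set of
hyperplanes (`d`-dimensional subspaces) containing at least one member of `Z`. Then
`|Γ(Z)| ≥ |Z|·N_{d−1}² / (N_{d−1} + (|Z| − 1)·N_{d−2})`, where
`N_k = (q^{k+1} − 1)/(q − 1)`. -/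
theorem neighborhood_lower_bound (d : ℕ) (hd : 1 ≤ d) (q : ℕ) (hq : IsPrimePow q)
    (F : Type*) [Field F] [Fintype F] (hcard : Fintype.card F = q)
    (Z : Set (Submodule F (Fin (d + 1) → F)))
    (hZ : Z.Nonempty) (hZ1 : ∀ a ∈ Z, Module.finrank F a = 1) :
    ((Z.ncard : ℝ) * (((q ^ d - 1) / (q - 1) : ℕ) : ℝ) ^ 2) /
        ((((q ^ d - 1) / (q - 1) : ℕ) : ℝ) +
          ((Z.ncard : ℝ) - 1) * (((q ^ (d - 1) - 1) / (q - 1) : ℕ) : ℝ)) ≤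
      ({c : Submodule F (Fin (d + 1) → F) |
          Module.finrank F c = d ∧ ∃ a ∈ Z, a ≤ c}.ncard : ℝ) :=
  neighborhood_lower_bound_general d q F hcard Z hZ hZ1
end

section
/- For every integer d ≥ 1 and every real c′ > 0 there exists a constant c = c(d, c′) > 0 such that the following holds for all N: if V is an N-element set and F is a family of (d+1)-element subsets of V with |F| ≥ c′·N^{d+1}, then there exist an integer m ≥ c·(log N)^{1/d} and pairwise disjoint m-element subsets Z₁, …, Z_{d+1} ⊆ V such that {z₁, …, z_{d+1}} ∈ F for every choice of z₁ ∈ Z₁, …, z_{d+1} ∈ Z_{d+1}. -/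
/-!
Work with ordered tuples: the injective `(d+1)`-tuples enumerating edges of `F` form a set `S` of
density at least `c'` in `(Fin N)^(d+1)`, and a box `A₀ × ⋯ × A_d ⊆ S` whose sides all have the
same size `m ≥ 1` has pairwise disjoint sides, because all its points are injective.

Boxes are found by induction on the dimension. For `S ⊆ V^(k+1)` of density `c`, with
`N = |V|`, Jensen's inequality on the slices of `S` along the last coordinate gives
`∑ g : Fin m → V, #{y | ∀ j, (y, g j) ∈ S} ≥ cᵐ N^(k+m)`. The non-injective `g` contribute at
most `m² N^(k+m-1)`, so some injective `g` has `cᵐ/2 · N^k` common prefixes `y`, and the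
induction hypothesis applied to them with density `cᵐ/2` yields the box. After `d` steps the
density is about `c^(m^d)`, so the induction needs `N ≥ m² (2/c)^(m^d)`, which allows
`m ≈ (log N)^(1/d)`.
-/

open Finset Fintype Function Real

theorem Nat.pow_succ_le_descFactorial_add (n m : ℕ) :
    n ^ (m + 1) ≤ n.descFactorial (m + 1) + (m + 1) ^ 2 * n ^ m := by
  induction m with
  | zero => simp
  | succ m ih =>
    have hdesc : n * n.descFactorial (m + 1) ≤ n.descFactorial (m + 2) + (m + 1) * n ^ (m + 1) :=
      calc n * n.descFactorial (m + 1)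
          ≤ (n - (m + 1) + (m + 1)) * n.descFactorial (m + 1) := by gcongr; omega
        _ = n.descFactorial (m + 2) + (m + 1) * n.descFactorial (m + 1) := by
          rw [Nat.descFactorial_succ n (m + 1), add_mul]
        _ ≤ n.descFactorial (m + 2) + (m + 1) * n ^ (m + 1) := by
          gcongr; exact Nat.descFactorial_le_pow n (m + 1)
    calc n ^ (m + 2) = n * n ^ (m + 1) := by ring
      _ ≤ n * (n.descFactorial (m + 1) + (m + 1) ^ 2 * n ^ m) := by gcongr
      _ ≤ n.descFactorial (m + 2) + ((m + 1) + (m + 1) ^ 2) * n ^ (m + 1) := by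
          ring_nf; ring_nf at hdesc; linarith
      _ ≤ n.descFactorial (m + 2) + (m + 2) ^ 2 * n ^ (m + 1) := by
          gcongr; nlinarith

section

variable {Y V : Type*} [Fintype Y] [Fintype V]

theorem sum_card_filter_pow_eq (r : Y → V → Prop) [DecidableRel r] (m : ℕ) :
    ∑ y, #{v | r y v} ^ m = ∑ g : Fin m → V, #{y | ∀ j, r y (g j)} := by
  have hpow (y : Y) : #{v | r y v} ^ m = #{g : Fin m → V | ∀ j, r y (g j)} := by
    rw [← card_piFinset_const]
    congr 1
    ext g
    simp
  simp_rw [hpow]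
  exact sum_card_bipartiteAbove_eq_sum_card_bipartiteBelow fun y (g : Fin m → V) => ∀ j, r y (g j)

theorem card_filter_not_injective_le [DecidableEq V] (m : ℕ) :
    #{g : Fin m → V | ¬Injective g} ≤ m ^ 2 * card V ^ (m - 1) := by
  cases m with
  | zero => simp [Function.injective_of_subsingleton]
  | succ m =>
    have hinj : #{g : Fin (m + 1) → V | Injective g} = (card V).descFactorial (m + 1) := by
      rw [← Fintype.card_subtype, Fintype.card_congr (Equiv.subtypeInjectiveEquivEmbedding _ _),
        Fintype.card_embedding_eq, Fintype.card_fin]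
    have htot := card_filter_add_card_filter_not (s := (univ : Finset (Fin (m + 1) → V)))
      (fun g => Injective g)
    rw [card_univ, Fintype.card_fun, Fintype.card_fin, hinj] at htot
    have := Nat.pow_succ_le_descFactorial_add (card V) m
    simp only [Nat.add_sub_cancel]
    omega

theorem sum_card_filter_forall_ge (r : Y → V → Prop) [DecidableRel r] {m : ℕ} {c : ℝ}
    (hm : 0 < m) (hc₀ : 0 ≤ c) (hr : c * card Y * card V ≤ ∑ y, (#{v | r y v} : ℝ)) :
    c ^ m * card Y * card V ^ m ≤ ∑ g : Fin m → V, (#{y | ∀ j, r y (g j)} : ℝ) := by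
  obtain ⟨k, rfl⟩ := Nat.exists_eq_add_of_lt hm
  rw [zero_add]
  have hsum := congrArg (Nat.cast (R := ℝ)) (sum_card_filter_pow_eq r (k + 1))
  push_cast at hsum
  rw [← hsum]
  rcases (card Y).eq_zero_or_pos with hY | hY
  · simp only [hY, Nat.cast_zero, mul_zero, zero_mul]
    exact Fintype.sum_nonneg fun _ => by positivity
  have hjensen := pow_sum_le_card_mul_sum_pow (s := univ) (f := fun y => (#{v | r y v} : ℝ))
    (fun _ _ => by positivity) k
  rw [card_univ] at hjensen
  refine le_of_mul_le_mul_left ?_ (by positivity : (0 : ℝ) < card Y ^ k)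
  calc (card Y : ℝ) ^ k * (c ^ (k + 1) * card Y * card V ^ (k + 1))
      = (c * card Y * card V) ^ (k + 1) := by ring
    _ ≤ (∑ y, (#{v | r y v} : ℝ)) ^ (k + 1) := by gcongr
    _ ≤ _ := hjensen

theorem exists_injective_card_filter_forall_ge [DecidableEq V] (r : Y → V → Prop)
    [DecidableRel r] {m : ℕ} {c : ℝ} (hm : 0 < m) (hc₀ : 0 ≤ c) (hc₁ : c ≤ 1)
    (hmc : 2 * m ^ 2 ≤ c ^ m * card V)
    (hr : c * card Y * card V ≤ ∑ y, (#{v | r y v} : ℝ)) :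
    ∃ g : Fin m → V, Injective g ∧ c ^ m / 2 * card Y ≤ #{y | ∀ j, r y (g j)} := by
  set n := card V
  set E : (Fin m → V) → ℝ := fun g => #{y | ∀ j, r y (g j)}
  have hcm : c ^ m ≤ 1 := pow_le_one₀ hc₀ hc₁
  have hmn : m ≤ n := by
    have hm1 : (1 : ℝ) ≤ m := by exact_mod_cast hm
    have : (m : ℝ) ≤ n :=
      calc (m : ℝ) ≤ 2 * m ^ 2 := by nlinarith
        _ ≤ c ^ m * n := hmc
        _ ≤ n := mul_le_of_le_one_left (by positivity) hcm
    exact_mod_cast this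
  have hbad : ∑ g with ¬Injective g, E g ≤ m ^ 2 * n ^ (m - 1) * card Y :=
    calc ∑ g with ¬Injective g, E g ≤ ∑ g : Fin m → V with ¬Injective g, (card Y : ℝ) := by
          gcongr with g; exact Nat.cast_le.2 (card_le_univ _)
      _ = #{g : Fin m → V | ¬Injective g} * card Y := by rw [sum_const, nsmul_eq_mul]
      _ ≤ m ^ 2 * n ^ (m - 1) * card Y := by
          gcongr; exact_mod_cast card_filter_not_injective_le m
  have hloss : 2 * (m ^ 2 * n ^ (m - 1) * card Y : ℝ) ≤ c ^ m * card Y * n ^ m := by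
    calc 2 * (m ^ 2 * n ^ (m - 1) * card Y : ℝ) = 2 * m ^ 2 * n ^ (m - 1) * card Y := by ring
      _ ≤ c ^ m * n * n ^ (m - 1) * card Y := by gcongr
      _ = c ^ m * card Y * n ^ m := by
        rw [mul_assoc _ (n : ℝ), ← pow_succ', Nat.sub_add_cancel hm]; ring
  have hgood : ∑ g : Fin m → V with Injective g, c ^ m / 2 * card Y
      ≤ ∑ g with Injective g, E g := by
    have htot := sum_filter_add_sum_filter_not univ (fun g : Fin m → V => Injective g) E
    have hall := sum_card_filter_forall_ge r hm hc₀ hr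
    have hI : (#{g : Fin m → V | Injective g} : ℝ) ≤ n ^ m := by
      exact_mod_cast (card_filter_le _ _).trans (by simp [n])
    rw [sum_const, nsmul_eq_mul]
    calc (#{g : Fin m → V | Injective g} : ℝ) * (c ^ m / 2 * card Y)
        ≤ n ^ m * (c ^ m / 2 * card Y) := by gcongr
      _ ≤ _ := by linarith
  have hne : ({g : Fin m → V | Injective g} : Finset _).Nonempty := by
    obtain ⟨e⟩ := Embedding.nonempty_of_card_le (α := Fin m) (β := V) (by simpa using hmn)
    exact ⟨e, by simpa using e.injective⟩
  obtain ⟨g, hg, hgE⟩ := exists_le_of_sum_le hne hgood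
  exact ⟨g, (mem_filter.1 hg).2, hgE⟩

theorem sum_card_filter_snoc_mem [DecidableEq V] {k : ℕ} (S : Finset (Fin (k + 1) → V)) :
    ∑ y : Fin k → V, #{v | (Fin.snoc y v : Fin (k + 1) → V) ∈ S} = #S := by
  rw [card_eq_sum_card_fiberwise (f := Fin.init) (t := univ) fun _ _ => mem_univ _]
  refine sum_congr rfl fun y _ =>
    card_nbij' (Fin.snoc (α := fun _ => V) y) (· (Fin.last k)) ?_ ?_ ?_ ?_
  · intro v hv
    simpa using hv
  · intro z hz
    simp only [coe_filter, Set.mem_ofPred_eq, mem_univ, true_and] at hz ⊢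
    rw [← hz.2, Fin.snoc_init_self]
    exact hz.1
  · intro v _
    simp
  · intro z hz
    simp only [coe_filter, Set.mem_ofPred_eq] at hz
    rw [← hz.2, Fin.snoc_init_self]

theorem four_div_pow_le_two_div_pow {c : ℝ} {m : ℕ} (hc : 0 < c) (hm : 2 ≤ m) :
    4 / c ^ m ≤ (2 / c) ^ m := by
  rw [div_pow]
  gcongr
  calc (4 : ℝ) = 2 ^ 2 := by norm_num
    _ ≤ 2 ^ m := pow_le_pow_right₀ one_le_two hm

theorem exists_piFinset_subset_of_card_ge [DecidableEq V] {m : ℕ} (hm : 2 ≤ m) (k : ℕ) {c : ℝ}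
    (hc₀ : 0 < c) (hc₁ : c ≤ 1) (S : Finset (Fin (k + 1) → V))
    (hn : m ^ 2 * (2 / c) ^ m ^ k ≤ card V) (hS : c * card V ^ (k + 1) ≤ #S) :
    ∃ A : Fin (k + 1) → Finset V, (∀ i, #(A i) = m) ∧ piFinset A ⊆ S := by
  induction k generalizing c with
  | zero =>
    have hmS : m ≤ #S := by
      have hm2 : (2 : ℝ) ≤ m := by exact_mod_cast hm
      have : (m : ℝ) ≤ #S :=
        calc (m : ℝ) ≤ 2 * m ^ 2 := by nlinarith
          _ = c * (m ^ 2 * (2 / c)) := by field_simp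
          _ ≤ c * card V := by gcongr; simpa using hn
          _ ≤ #S := by simpa using hS
      exact_mod_cast this
    obtain ⟨T, hTS, hT⟩ := exists_subset_card_eq hmS
    have hinj : Injective fun z : Fin 1 → V => z 0 := (Equiv.funUnique (Fin 1) V).injective
    refine ⟨fun _ => T.image (· 0), fun _ => by rw [card_image_of_injective _ hinj, hT], ?_⟩
    intro z hz
    obtain ⟨t, ht, htz⟩ := mem_image.1 (mem_piFinset.1 hz 0)
    exact hinj htz ▸ hTS ht
  | succ k ih =>
    have hK : (2 : ℝ) ≤ 2 / c := by rw [le_div_iff₀ hc₀]; linarith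
    have hmc : 2 * m ^ 2 ≤ c ^ m * card V := by
      have h4 : 2 / c ^ m ≤ (2 / c) ^ m ^ (k + 1) :=
        calc 2 / c ^ m ≤ 4 / c ^ m := by gcongr; norm_num
          _ ≤ (2 / c) ^ m := four_div_pow_le_two_div_pow hc₀ hm
          _ ≤ (2 / c) ^ m ^ (k + 1) :=
            pow_le_pow_right₀ (by linarith) (Nat.le_self_pow (by omega) m)
      have := (mul_le_mul_of_nonneg_left h4 (by positivity : (0 : ℝ) ≤ m ^ 2)).trans hn
      rw [mul_div_assoc', div_le_iff₀ (by positivity)] at this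
      linarith
    have hr : c * card (Fin (k + 1) → V) * card V
        ≤ ∑ y : Fin (k + 1) → V, (#{v | (Fin.snoc y v : Fin (k + 2) → V) ∈ S} : ℝ) := by
      rw [← Nat.cast_sum, sum_card_filter_snoc_mem, card_fun, Fintype.card_fin]
      push_cast
      rwa [mul_assoc, ← pow_succ]
    obtain ⟨g, hg, hgS⟩ := exists_injective_card_filter_forall_ge _ (by omega) hc₀.le hc₁ hmc hr
    obtain ⟨A, hA, hAS⟩ := ih (c := c ^ m / 2) (by positivity)
      (by linarith [pow_le_one₀ hc₀.le hc₁ (n := m)]) {y | ∀ j, Fin.snoc y (g j) ∈ S}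
      (by
        calc (m : ℝ) ^ 2 * (2 / (c ^ m / 2)) ^ m ^ k = m ^ 2 * (4 / c ^ m) ^ m ^ k := by
              congr 2; field_simp; norm_num
          _ ≤ m ^ 2 * ((2 / c) ^ m) ^ m ^ k := by
              gcongr; exact four_div_pow_le_two_div_pow hc₀ hm
          _ = m ^ 2 * (2 / c) ^ m ^ (k + 1) := by rw [← pow_mul, ← pow_succ']
          _ ≤ card V := hn)
      (by simpa using hgS)
    refine ⟨Fin.snoc A (univ.image g), fun i => ?_, fun z hz => ?_⟩
    · induction i using Fin.lastCases with
      | last => simp [card_image_of_injective _ hg]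
      | cast i => simpa using hA i
    · rw [Fin.mem_piFinset_iff_last_init, Fin.snoc_last, Fin.init_snoc] at hz
      obtain ⟨j, -, hj⟩ := mem_image.1 hz.1
      simpa [hj] using (mem_filter.1 (hAS hz.2)).2 j

end

theorem sq_mul_pow_pow_le_of_le_log {K N : ℝ} {m d : ℕ} (hK : 2 ≤ K) (hd : d ≠ 0) (hN : 0 < N)
    (hm : 3 * m ^ d * log K ≤ log N) : m ^ 2 * K ^ m ^ d ≤ N := by
  have hmK : (m : ℝ) ≤ K ^ m ^ d :=
    calc (m : ℝ) ≤ 2 ^ m := by exact_mod_cast Nat.lt_two_pow_self.le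
      _ ≤ K ^ m := by gcongr
      _ ≤ K ^ m ^ d := pow_le_pow_right₀ (by linarith) (Nat.le_self_pow hd m)
  calc (m : ℝ) ^ 2 * K ^ m ^ d ≤ (K ^ m ^ d) ^ 2 * K ^ m ^ d := by gcongr
    _ = K ^ (3 * m ^ d) := by ring
    _ ≤ N := by
      rw [← log_le_log_iff (by positivity) hN, log_pow]
      exact_mod_cast hm

theorem exists_piFinset_subset_of_log {V : Type*} [Fintype V] [DecidableEq V] {d : ℕ} (hd : d ≠ 0)
    {c : ℝ} (hc₀ : 0 < c) (hc₁ : c ≤ 1) (S : Finset (Fin (d + 1) → V))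
    (hS : c * card V ^ (d + 1) ≤ #S) :
    ∃ m : ℕ, (log (card V) / (3 * log (2 / c))) ^ ((1 : ℝ) / d) / 2 ≤ m ∧
      ∃ A : Fin (d + 1) → Finset V, (∀ i, #(A i) = m) ∧ piFinset A ⊆ S := by
  have hK : (2 : ℝ) ≤ 2 / c := by rw [le_div_iff₀ hc₀]; linarith
  have hlogK : 0 < log (2 / c) := log_pos (by linarith)
  set x := (log (card V) / (3 * log (2 / c))) ^ ((1 : ℝ) / d)
  have hd' : (d : ℝ)⁻¹ ≠ 0 := inv_ne_zero (by exact_mod_cast hd)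
  rcases lt_or_ge x 2 with hx | hx
  · rcases S.eq_empty_or_nonempty with rfl | ⟨z, hz⟩
    · have hV : card V = 0 := by
        have : c * card V ^ (d + 1) ≤ 0 := by simpa using hS
        have : (card V : ℝ) ^ (d + 1) ≤ 0 := nonpos_of_mul_nonpos_right this hc₀
        exact_mod_cast (pow_eq_zero_iff (n := d + 1) (by omega)).1
          (le_antisymm this (by positivity))
      refine ⟨0, ?_, fun _ => ∅, fun _ => Finset.card_empty, by simp⟩
      simp [x, hV, zero_rpow hd']
    · exact ⟨1, by linarith, fun i => {z i}, fun _ => card_singleton _, by simpa⟩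
  · have hm2 : 2 ≤ ⌊x⌋₊ := Nat.le_floor (by exact_mod_cast hx)
    refine ⟨⌊x⌋₊, by linarith [Nat.lt_floor_add_one x],
      exists_piFinset_subset_of_card_ge hm2 d hc₀ hc₁ S ?_ hS⟩
    have hlogV : 0 < log (card V) := by
      by_contra! h
      have : x = 0 := by simp [x, le_antisymm h (log_natCast_nonneg _), zero_rpow hd']
      linarith
    have hV : (0 : ℝ) < card V :=
      Nat.cast_pos.2 (Nat.pos_of_ne_zero fun h => by simp [h] at hlogV)
    refine sq_mul_pow_pow_le_of_le_log hK hd hV ?_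
    have hxd : x ^ d = log (card V) / (3 * log (2 / c)) := by
      simp only [x, one_div]
      exact rpow_inv_natCast_pow (by positivity) hd
    have : (⌊x⌋₊ : ℝ) ^ d ≤ log (card V) / (3 * log (2 / c)) :=
      hxd ▸ pow_le_pow_left₀ (by positivity) (Nat.floor_le (by positivity)) d
    rw [le_div_iff₀ (by positivity)] at this
    linarith

theorem pairwise_disjoint_of_forall_mem_piFinset_injective {ι α : Type*} [Fintype ι]
    [DecidableEq ι] [DecidableEq α] {A : ι → Finset α} {m : ℕ} (hA : ∀ i, #(A i) = m)
    (hinj : ∀ z ∈ piFinset A, Injective z) : Pairwise (Disjoint on A) := by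
  intro i j hij
  rw [onFun, disjoint_left]
  intro v hvi hvj
  have hne (l : ι) : (A l).Nonempty := card_pos.1 (hA l ▸ hA i ▸ card_pos.2 ⟨v, hvi⟩)
  choose w hw using hne
  let z := update (update w i v) j v
  have hz : z ∈ piFinset A := mem_piFinset.2 fun l => by
    rcases eq_or_ne l j with rfl | hlj
    · simpa [z]
    rcases eq_or_ne l i with rfl | hli
    · simpa [z, hlj]
    simpa [z, hlj, hli] using hw l
  exact hij (hinj z hz (by simp [z, hij]))

theorem card_le_card_filter_injective_image_mem {α : Type*} [Fintype α] [LinearOrder α] {k : ℕ}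
    {F : Finset (Finset α)} (hF : ∀ σ ∈ F, #σ = k) :
    #F ≤ #{z : Fin k → α | Injective z ∧ univ.image z ∈ F} := by
  refine card_le_card_of_surjOn (fun z => univ.image z) fun σ hσ => ?_
  refine ⟨σ.orderEmbOfFin (hF σ hσ), ?_, image_orderEmbOfFin_univ σ _⟩
  simpa [image_orderEmbOfFin_univ] using ⟨(σ.orderEmbOfFin (hF σ hσ)).injective, hσ⟩

/-- **Erdős's theorem on complete `(d+1)`-partite subhypergraphs.** For every `d ≥ 1` and
`c' > 0` there is `c > 0` such that for all `N`: if `F` is a family of `(d+1)`-element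
subsets of an `N`-element set `V` with `|F| ≥ c'·N^{d+1}`, then there exist
`m ≥ c·(log N)^{1/d}` and pairwise disjoint `m`-element subsets `Z 0, …, Z d ⊆ V` with
`{z 0, …, z d} ∈ F` for every choice `z i ∈ Z i`. -/
theorem erdos_multipartite (d : ℕ) (hd : 1 ≤ d) (c' : ℝ) (hc' : 0 < c') :
    ∃ c : ℝ, 0 < c ∧
      ∀ (N : ℕ) (F : Finset (Finset (Fin N))),
        (∀ σ ∈ F, σ.card = d + 1) →
        c' * (N : ℝ) ^ (d + 1) ≤ (F.card : ℝ) →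
        ∃ m : ℕ, c * (Real.log N) ^ ((1 : ℝ) / d) ≤ (m : ℝ) ∧
          ∃ Z : Fin (d + 1) → Finset (Fin N),
            (∀ i, (Z i).card = m) ∧
            (∀ i j, i ≠ j → Disjoint (Z i) (Z j)) ∧
            ∀ z : Fin (d + 1) → Fin N, (∀ i, z i ∈ Z i) →
              Finset.image z Finset.univ ∈ F := by
  set c₀ := min c' 1
  have hc₀ : 0 < c₀ := lt_min hc' one_pos
  set a := 3 * log (2 / c₀)
  have ha : 0 < a := mul_pos three_pos <| log_pos <| by
    rw [lt_div_iff₀ hc₀]; linarith [min_le_right c' 1]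
  refine ⟨1 / (2 * a ^ ((1 : ℝ) / d)), by positivity, fun N F hF hcard => ?_⟩
  set S : Finset (Fin (d + 1) → Fin N) := {z | Injective z ∧ univ.image z ∈ F}
  have hS : c₀ * card (Fin N) ^ (d + 1) ≤ #S :=
    calc c₀ * card (Fin N) ^ (d + 1) ≤ c' * N ^ (d + 1) := by
          rw [Fintype.card_fin]; gcongr; exact min_le_left _ _
      _ ≤ #F := hcard
      _ ≤ #S := by exact_mod_cast card_le_card_filter_injective_image_mem hF
  obtain ⟨m, hm, A, hA, hAS⟩ :=
    exists_piFinset_subset_of_log (by omega) hc₀ (min_le_right _ _) S hS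
  have hmem (z) (hz : z ∈ piFinset A) : Injective z ∧ univ.image z ∈ F :=
    (mem_filter.1 (hAS hz)).2
  refine ⟨m, ?_, A, hA,
    fun i j hij =>
      pairwise_disjoint_of_forall_mem_piFinset_injective hA (fun z hz => (hmem z hz).1) hij,
    fun z hz => (hmem z (mem_piFinset.2 hz)).2⟩
  rw [Fintype.card_fin, div_rpow (log_natCast_nonneg N) ha.le] at hm
  calc 1 / (2 * a ^ ((1 : ℝ) / d)) * log N ^ ((1 : ℝ) / d)
      = log N ^ ((1 : ℝ) / d) / a ^ ((1 : ℝ) / d) / 2 := by ring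
    _ ≤ m := hm
end
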